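/- arXiv:1101.5455 — 4 statements merged into one kernel-verified Lean document; each statement's English description precedes it below -/
import Mathlib

section
/- With notation as in the Robin Hood construction, for all (s,t) ∈ D_α, the first coordinate of rh_α(s,t) is at least min{1, s} and the second coordinate is at least min{1, t}. -/
/-- The `α`-weighted average `m_α(s,t) = αs + (1-α)t`. -/
def mA (α s t : ℝ) : ℝ := α * s + (1 - α) * t

/-- The "Robin Hood" map `rh_α`, defined by cases on `D_α`. -/
noncomputable def rh (α s t : ℝ) : ℝ × ℝ :=
  if 0 ≤ s ∧ s ≤ 1 ∧ 0 ≤ t ∧ t ≤ 1 then (s, t)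
  else if 1 ≤ mA α s t then (mA α s t, mA α s t)
  else if 1 ≤ s then (1, mA α (s - 1) t / (1 - α))
  else (mA α s (t - 1) / α, 1)

theorem stmt7 (α : ℝ) (hα : 0 < α ∧ α < 1) (s t : ℝ)
    (hD : 1 ≤ mA α s t ∨ (0 ≤ s ∧ 0 ≤ t)) :
    min 1 s ≤ (rh α s t).1 ∧ min 1 t ≤ (rh α s t).2 := by
  obtain ⟨hα0, hα1⟩ := hα
  unfold rh mA at *
  split_ifs with h1 h2 h3
  · exact ⟨min_le_right 1 s, min_le_right 1 t⟩
  · exact ⟨le_trans (min_le_left _ _) h2, le_trans (min_le_left _ _) h2⟩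
  · refine ⟨min_le_left _ _, le_trans (min_le_right _ _) ?_⟩
    rw [le_div_iff₀ (by linarith)]
    nlinarith
  · push_neg at h1 h2 h3
    have ht : 0 ≤ t := by
      rcases hD with h | h
      · linarith
      · exact h.2
    have hs : 0 ≤ s := by
      rcases hD with h | h
      · nlinarith
      · exact h.1
    have ht1 : 1 ≤ t := by
      by_contra h
      push_neg at h
      exact absurd (h1 hs (le_of_lt h3) ht) (not_lt.2 (le_of_lt h))
    refine ⟨le_trans (min_le_right _ _) ?_, min_le_left _ _⟩
    rw [le_div_iff₀ hα0]
    nlinarith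
end

section
/- If Φ and Ψ are two ν-measurements of the same set X in R (each satisfying the conditions above, and the Measure Conservation property holds), then for all r ∈ ℕ, |Φ⁺_r(λ) − Ψ⁺_r(λ)| ≤ 2^{-r} and |Φ⁻_r(λ) − Ψ⁻_r(λ)| ≤ 2^{-r}; hence Φ⁺_∞ = Ψ⁺_∞ and Φ⁻_∞ = Ψ⁻_∞, so the measure of X in R is well-defined. -/
def IsProbMeasure (ν : List Bool → ℝ) : Prop :=
  ν [] = 1 ∧ (∀ w, 0 ≤ ν w ∧ ν w ≤ 1) ∧
    ∀ w, ν w = ν (w ++ [false]) + ν (w ++ [true])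

def IsMartingale (ν d : List Bool → ℝ) : Prop :=
  (∀ w, 0 ≤ d w) ∧
    ∀ w, d w * ν w =
      d (w ++ [false]) * ν (w ++ [false]) + d (w ++ [true]) * ν (w ++ [true])

def seqPrefix (A : ℕ → Bool) (n : ℕ) : List Bool := List.ofFn (fun i : Fin n => A i)

def S1 (d : List Bool → ℝ) : Set (ℕ → Bool) := {A | ∃ n, 1 ≤ d (seqPrefix A n)}

lemma aux_le_of_pow (x y : ℝ) (h : ∀ k : ℕ, x ≤ y + (1/2 : ℝ) ^ k) : x ≤ y := by
  by_contra hc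
  push_neg at hc
  obtain ⟨k, hk⟩ := exists_pow_lt_of_lt_one (sub_pos.mpr hc) (by norm_num : (1/2:ℝ) < 1)
  have := h k
  linarith

theorem stmt10 (ν : List Bool → ℝ) (hν : IsProbMeasure ν)
    (R X : Set (ℕ → Bool))
    (Φp Φm Ψp Ψm : ℕ → List Bool → ℝ)
    -- Φ and Ψ are ν-measurements of X in R:
    (hΦ : ∀ r, IsMartingale ν (Φp r) ∧ IsMartingale ν (Φm r) ∧
      R ∩ X ⊆ S1 (Φp r) ∧ R \ X ⊆ S1 (Φm r) ∧
      Φp r [] + Φm r [] ≤ 1 + (1/2 : ℝ) ^ r)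
    (hΨ : ∀ r, IsMartingale ν (Ψp r) ∧ IsMartingale ν (Ψm r) ∧
      R ∩ X ⊆ S1 (Ψp r) ∧ R \ X ⊆ S1 (Ψm r) ∧
      Ψp r [] + Ψm r [] ≤ 1 + (1/2 : ℝ) ^ r)
    -- Measure Conservation:
    (hMC1 : ∀ j k, 1 ≤ Φp j [] + Ψm k [])
    (hMC2 : ∀ j k, 1 ≤ Ψp j [] + Φm k []) :
    (∀ r : ℕ, |Φp r [] - Ψp r []| ≤ (1/2 : ℝ) ^ r ∧
      |Φm r [] - Ψm r []| ≤ (1/2 : ℝ) ^ r) ∧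
    (⨅ r : ℕ, Φp r []) = ⨅ r : ℕ, Ψp r [] ∧
    (⨅ r : ℕ, Φm r []) = ⨅ r : ℕ, Ψm r [] := by
  have bdΨp : BddBelow (Set.range fun r => Ψp r []) :=
    ⟨0, by rintro _ ⟨r, rfl⟩; exact ((hΨ r).1.1 [])⟩
  have bdΦp : BddBelow (Set.range fun r => Φp r []) :=
    ⟨0, by rintro _ ⟨r, rfl⟩; exact ((hΦ r).1.1 [])⟩
  have bdΨm : BddBelow (Set.range fun r => Ψm r []) :=
    ⟨0, by rintro _ ⟨r, rfl⟩; exact ((hΨ r).2.1.1 [])⟩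
  have bdΦm : BddBelow (Set.range fun r => Φm r []) :=
    ⟨0, by rintro _ ⟨r, rfl⟩; exact ((hΦ r).2.1.1 [])⟩
  refine ⟨fun r => ?_, ?_, ?_⟩
  · have hΦ5 := (hΦ r).2.2.2.2
    have hΨ5 := (hΨ r).2.2.2.2
    have h1 := hMC1 r r
    have h2 := hMC2 r r
    constructor <;> rw [abs_le] <;> constructor <;> linarith
  · apply le_antisymm
    · refine le_ciInf fun j => ?_
      refine aux_le_of_pow _ _ fun k => ?_
      have h1 := hMC2 j k
      have hΦ5 := (hΦ k).2.2.2.2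
      have : ⨅ r : ℕ, Φp r [] ≤ Φp k [] := ciInf_le bdΦp k
      linarith
    · refine le_ciInf fun j => ?_
      refine aux_le_of_pow _ _ fun k => ?_
      have h1 := hMC1 j k
      have hΨ5 := (hΨ k).2.2.2.2
      have : ⨅ r : ℕ, Ψp r [] ≤ Ψp k [] := ciInf_le bdΨp k
      linarith
  · apply le_antisymm
    · refine le_ciInf fun j => ?_
      refine aux_le_of_pow _ _ fun k => ?_
      have h1 := hMC1 k j
      have hΦ5 := (hΦ k).2.2.2.2
      have : ⨅ r : ℕ, Φm r [] ≤ Φm k [] := ciInf_le bdΦm k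
      linarith
    · refine le_ciInf fun j => ?_
      refine aux_le_of_pow _ _ fun k => ?_
      have h1 := hMC2 k j
      have hΨ5 := (hΨ k).2.2.2.2
      have : ⨅ r : ℕ, Ψm r [] ≤ Ψm k [] := ciInf_le bdΨm k
      linarith
end

section
/- A set X ⊆ Cantor space is Carathéodory ν-measurable (for every Y, ν*(Y) = ν*(Y∩X) + ν*(Y−X)) if and only if it admits an 'all-ν-measurement': a functional Φ mapping each r ∈ ℕ and each ν-martingale d to a pair of ν-martingales (Φ⁺_r(d), Φ⁻_r(d)) with X ∩ S¹[d] ⊆ S¹[Φ⁺_r(d)], X^c ∩ S¹[d] ⊆ S¹[Φ⁻_r(d)], and Φ⁺_r(d)(λ)+Φ⁻_r(d)(λ) ≤ d(λ)+2^{-r}. Moreover in this case the classical ν-measure of X equals inf_r Φ⁺_r(𝟏)(λ), where 𝟏 is the constant-1 martingale. -/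
def IsPrefixSet (A : Set (List Bool)) : Prop :=
  ∀ u ∈ A, ∀ v ∈ A, u <+: v → u = v

def cyl (w : List Bool) : Set (ℕ → Bool) := {A | seqPrefix A w.length = w}

/-- Classical outer ν-measure via open covers generated by prefix sets. -/
noncomputable def outerMeasure (ν : List Bool → ℝ) (X : Set (ℕ → Bool)) : ℝ :=
  sInf {x | ∃ A : Set (List Bool), IsPrefixSet A ∧
    X ⊆ (⋃ w ∈ A, cyl w) ∧ x = ∑' w : A, ν w.1}

/-- An `all`-ν-measurement of `X`: a splitting operator on all ν-martingales. -/
def IsAllMeasurement (ν : List Bool → ℝ) (X : Set (ℕ → Bool))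
    (Φ : ℕ → (List Bool → ℝ) → (List Bool → ℝ) × (List Bool → ℝ)) : Prop :=
  ∀ r d, IsMartingale ν d →
    IsMartingale ν (Φ r d).1 ∧ IsMartingale ν (Φ r d).2 ∧
    X ∩ S1 d ⊆ S1 (Φ r d).1 ∧ Xᶜ ∩ S1 d ⊆ S1 (Φ r d).2 ∧
    (Φ r d).1 [] + (Φ r d).2 [] ≤ d [] + (1/2 : ℝ) ^ r

namespace Stmt11

theorem seqPrefix_length (x : ℕ → Bool) (n : ℕ) : (seqPrefix x n).length = n := by
  simp [seqPrefix]

theorem seqPrefix_succ (x : ℕ → Bool) (n : ℕ) :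
    seqPrefix x (n + 1) = seqPrefix x n ++ [x n] := by
  unfold seqPrefix
  rw [List.ofFn_succ']
  simp [List.concat_eq_append]

theorem seqPrefix_take (x : ℕ → Bool) {m n : ℕ} (h : m ≤ n) :
    (seqPrefix x n).take m = seqPrefix x m := by
  apply List.ext_getElem
  · simp [seqPrefix]; omega
  · intro i h1 h2
    simp [seqPrefix] at h1 h2 ⊢

theorem seqPrefix_prefix (x : ℕ → Bool) {m n : ℕ} (h : m ≤ n) :
    seqPrefix x m <+: seqPrefix x n := by
  rw [← seqPrefix_take x h]; exact List.take_prefix _ _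

/-- u is a (list-)prefix of the sequence x -/
def SP (u : List Bool) (x : ℕ → Bool) : Prop := seqPrefix x u.length = u

theorem mem_cyl {u : List Bool} {x : ℕ → Bool} : x ∈ cyl u ↔ SP u x := Iff.rfl

theorem SP_seqPrefix (x : ℕ → Bool) (n : ℕ) : SP (seqPrefix x n) x := by
  unfold SP; rw [seqPrefix_length]

theorem SP.of_prefix {u v : List Bool} {x : ℕ → Bool} (h : u <+: v) (hv : SP v x) : SP u x := by
  have hl : u.length ≤ v.length := h.length_le
  unfold SP at *
  conv_rhs => rw [List.prefix_iff_eq_take.mp h, ← hv]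
  rw [seqPrefix_take x hl]

theorem SP.comparable {u v : List Bool} {x : ℕ → Bool} (hu : SP u x) (hv : SP v x) :
    u <+: v ∨ v <+: u := by
  rcases le_total u.length v.length with h | h
  · left; rw [← hu, ← hv, ← seqPrefix_take x h]; exact List.take_prefix _ _
  · right; rw [← hu, ← hv, ← seqPrefix_take x h]; exact List.take_prefix _ _

theorem cyl_mono {u v : List Bool} (h : u <+: v) : cyl v ⊆ cyl u :=
  fun _ hx => SP.of_prefix h hx

/-- canonical extension of a finite string -/
def ext (u : List Bool) : ℕ → Bool := fun i => u.getD i false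

theorem SP_ext (u : List Bool) : SP u (ext u) := by
  apply List.ext_getElem
  · simp [seqPrefix]
  · intro i h1 h2
    simp [seqPrefix, ext, List.getD_eq_getElem?_getD, List.getElem?_eq_getElem h2]

theorem prefix_split {w u : List Bool} (h : w <+: u) (hne : w ≠ u) :
    w ++ [false] <+: u ∨ w ++ [true] <+: u := by
  obtain ⟨t, rfl⟩ := h
  cases t with
  | nil => simp at hne
  | cons b t' =>
    have : w ++ b :: t' = (w ++ [b]) ++ t' := by simp
    rw [this]
    cases b
    · left; exact ⟨t', rfl⟩
    · right; exact ⟨t', rfl⟩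

theorem prefix_snoc {u w : List Bool} {b : Bool} (h : u <+: w ++ [b]) :
    u <+: w ∨ u = w ++ [b] := by
  rcases le_or_gt u.length w.length with hl | hl
  · left
    have h1 := List.prefix_iff_eq_take.mp h
    rw [List.take_append_of_le_length hl] at h1
    rw [h1]; exact List.take_prefix _ _
  · right
    apply h.eq_of_length
    have := h.length_le
    simp at this ⊢
    omega

theorem not_prefix_both {w u : List Bool} (h0 : w ++ [false] <+: u) (h1 : w ++ [true] <+: u) :
    False := by
  rcases List.prefix_or_prefix_of_prefix h0 h1 with h | h
  · have := h.eq_of_length (by simp)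
    simpa using this
  · have := h.eq_of_length (by simp)
    simpa using this

end Stmt11

namespace Stmt11

variable {ν : List Bool → ℝ}

theorem nu_nonneg (hν : IsProbMeasure ν) (w : List Bool) : 0 ≤ ν w := (hν.2.1 w).1

theorem nu_child_le (hν : IsProbMeasure ν) (w : List Bool) (b : Bool) :
    ν (w ++ [b]) ≤ ν w := by
  have h := hν.2.2 w
  cases b
  · nlinarith [nu_nonneg hν (w ++ [true])]
  · nlinarith [nu_nonneg hν (w ++ [false])]

theorem nu_append_le (hν : IsProbMeasure ν) : ∀ (t u : List Bool), ν (u ++ t) ≤ ν u := by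
  intro t
  induction t with
  | nil => simp
  | cons b t' ih =>
    intro u
    have h1 : u ++ b :: t' = (u ++ [b]) ++ t' := by simp
    rw [h1]
    exact le_trans (ih (u ++ [b])) (nu_child_le hν u b)

theorem nu_mono (hν : IsProbMeasure ν) {u v : List Bool} (h : u <+: v) : ν v ≤ ν u := by
  obtain ⟨t, rfl⟩ := h
  exact nu_append_le hν t u

theorem nu_zero_of_prefix (hν : IsProbMeasure ν) {u v : List Bool} (h : u <+: v)
    (hu : ν u = 0) : ν v = 0 :=
  le_antisymm (hu ▸ nu_mono hν h) (nu_nonneg hν v)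

theorem one_martingale (hν : IsProbMeasure ν) : IsMartingale ν (fun _ => (1:ℝ)) := by
  refine ⟨fun _ => zero_le_one, fun w => ?_⟩
  simpa using hν.2.2 w

/-- finite antichain bound -/
theorem finset_antichain (hν : IsProbMeasure ν) {d : List Bool → ℝ} (hd : IsMartingale ν d) :
    ∀ (n : ℕ) (w : List Bool) (F : Finset (List Bool)),
      (∀ u ∈ F, w <+: u ∧ u.length ≤ w.length + n) →
      (∀ u ∈ F, ∀ v ∈ F, u <+: v → u = v) →
      ∑ u ∈ F, d u * ν u ≤ d w * ν w := by
  intro n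
  induction n with
  | zero =>
    intro w F hF hanti
    have hsub : F ⊆ {w} := by
      intro u hu
      rcases hF u hu with ⟨h1, h2⟩
      simp only [Finset.mem_singleton]
      exact (h1.eq_of_length (by have := h1.length_le; omega)).symm
    rcases Finset.subset_singleton_iff.mp hsub with h | h
    · rw [h]; simp; exact mul_nonneg (hd.1 w) (nu_nonneg hν w)
    · rw [h]; simp
  | succ n ih =>
    intro w F hF hanti
    by_cases hw : w ∈ F
    · have hsub : F = {w} := by
        apply Finset.eq_singleton_iff_unique_mem.mpr
        exact ⟨hw, fun u hu => (hanti w hw u hu (hF u hu).1).symm⟩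
      rw [hsub]; simp
    · set F0 := F.filter (fun u => w ++ [false] <+: u) with hF0
      set F1 := F.filter (fun u => w ++ [true] <+: u) with hF1
      have hdisj : Disjoint F0 F1 := by
        rw [Finset.disjoint_left]
        intro u hu0 hu1
        rw [hF0, Finset.mem_filter] at hu0
        rw [hF1, Finset.mem_filter] at hu1
        exact not_prefix_both hu0.2 hu1.2
      have hunion : F = F0 ∪ F1 := by
        ext u
        simp only [hF0, hF1, Finset.mem_union, Finset.mem_filter]
        constructor
        · intro hu
          have hne : w ≠ u := fun h => hw (h ▸ hu)
          rcases prefix_split (hF u hu).1 hne with h | h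
          · exact Or.inl ⟨hu, h⟩
          · exact Or.inr ⟨hu, h⟩
        · rintro (⟨hu, _⟩ | ⟨hu, _⟩) <;> exact hu
      have key : ∀ b : Bool, ∑ u ∈ F.filter (fun u => w ++ [b] <+: u), d u * ν u ≤
          d (w ++ [b]) * ν (w ++ [b]) := by
        intro b
        apply ih (w ++ [b])
        · intro u hu
          rw [Finset.mem_filter] at hu
          refine ⟨hu.2, ?_⟩
          have := (hF u hu.1).2
          simp only [List.length_append, List.length_cons, List.length_nil]
          omega
        · intro u hu v hv
          rw [Finset.mem_filter] at hu hv
          exact hanti u hu.1 v hv.1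
      calc ∑ u ∈ F, d u * ν u = ∑ u ∈ F0, d u * ν u + ∑ u ∈ F1, d u * ν u := by
            rw [hunion, Finset.sum_union hdisj]
        _ ≤ d (w ++ [false]) * ν (w ++ [false]) + d (w ++ [true]) * ν (w ++ [true]) :=
            add_le_add (key false) (key true)
        _ = d w * ν w := (hd.2 w).symm

/-- tsum over indicator of a set -/
noncomputable def covSum (ν : List Bool → ℝ) (B : Set (List Bool)) : ℝ :=
  ∑' u, B.indicator ν u

theorem antichain_tsum (hν : IsProbMeasure ν) {d : List Bool → ℝ} (hd : IsMartingale ν d)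
    (w₀ : List Bool) {A : Set (List Bool)} (hA : IsPrefixSet A) (hext : ∀ u ∈ A, w₀ <+: u) :
    Summable (A.indicator (fun u => d u * ν u)) ∧
      ∑' u, A.indicator (fun u => d u * ν u) u ≤ d w₀ * ν w₀ := by
  classical
  have hnn : ∀ u, 0 ≤ A.indicator (fun u => d u * ν u) u := by
    intro u
    apply Set.indicator_nonneg
    intro v _
    exact mul_nonneg (hd.1 v) (nu_nonneg hν v)
  have key : ∀ G : Finset (List Bool), ∑ u ∈ G, A.indicator (fun u => d u * ν u) u ≤
      d w₀ * ν w₀ := by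
    intro G
    rw [Finset.sum_indicator_eq_sum_filter]
    apply finset_antichain hν hd (∑ u ∈ G, u.length + w₀.length) w₀
    · intro u hu
      rw [Finset.mem_filter] at hu
      refine ⟨hext u hu.2, ?_⟩
      have : u.length ≤ ∑ v ∈ G, v.length := Finset.single_le_sum (fun v _ => Nat.zero_le _) hu.1
      omega
    · intro u hu v hv
      rw [Finset.mem_filter] at hu hv
      exact hA u hu.2 v hv.2
  have hs : Summable (A.indicator (fun u => d u * ν u)) := summable_of_sum_le hnn key
  exact ⟨hs, Summable.tsum_le_of_sum_le hs key⟩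

theorem summable_indicator_nu (hν : IsProbMeasure ν) {A : Set (List Bool)}
    (hA : IsPrefixSet A) : Summable (A.indicator ν) := by
  have h := (antichain_tsum hν (one_martingale hν) [] hA (fun u _ => List.nil_prefix)).1
  simpa using h

theorem covSum_le_of_ext (hν : IsProbMeasure ν) (w₀ : List Bool) {A : Set (List Bool)}
    (hA : IsPrefixSet A) (hext : ∀ u ∈ A, w₀ <+: u) : covSum ν A ≤ ν w₀ := by
  have h := (antichain_tsum hν (one_martingale hν) w₀ hA hext).2
  simpa [covSum] using h

theorem covSum_nonneg (hν : IsProbMeasure ν) (A : Set (List Bool)) : 0 ≤ covSum ν A :=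
  tsum_nonneg (fun u => Set.indicator_nonneg (fun v _ => nu_nonneg hν v) u)

theorem summable_sub (hν : IsProbMeasure ν) {A B : Set (List Bool)} (hB : IsPrefixSet B)
    (hAB : A ⊆ B) : Summable (A.indicator ν) := by
  apply Summable.of_nonneg_of_le (fun u => Set.indicator_nonneg (fun v _ => nu_nonneg hν v) u)
    _ (summable_indicator_nu hν hB)
  intro u
  by_cases hu : u ∈ A
  · rw [Set.indicator_of_mem hu, Set.indicator_of_mem (hAB hu)]
  · rw [Set.indicator_of_notMem hu]
    exact Set.indicator_nonneg (fun v _ => nu_nonneg hν v) u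

theorem covSum_mono_sub (hν : IsProbMeasure ν) {A B : Set (List Bool)} (hB : IsPrefixSet B)
    (hAB : A ⊆ B) : covSum ν A ≤ covSum ν B := by
  apply Summable.tsum_le_tsum _ (summable_sub hν hB hAB) (summable_indicator_nu hν hB)
  intro u
  by_cases hu : u ∈ A
  · rw [Set.indicator_of_mem hu, Set.indicator_of_mem (hAB hu)]
  · rw [Set.indicator_of_notMem hu]
    exact Set.indicator_nonneg (fun v _ => nu_nonneg hν v) u

theorem le_covSum (hν : IsProbMeasure ν) {A : Set (List Bool)} (hA : IsPrefixSet A)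
    {u : List Bool} (hu : u ∈ A) : ν u ≤ covSum ν A := by
  have := Summable.le_tsum (summable_indicator_nu hν hA) u
    (fun v _ => Set.indicator_nonneg (fun v _ => nu_nonneg hν v) v)
  rwa [Set.indicator_of_mem hu] at this

end Stmt11

namespace Stmt11

variable {ν : List Bool → ℝ}

theorem covSum_eq_subtype (ν : List Bool → ℝ) (A : Set (List Bool)) :
    (∑' w : A, ν w.1) = covSum ν A := tsum_subtype A ν

def coverSet (ν : List Bool → ℝ) (X : Set (ℕ → Bool)) : Set ℝ :=
  {x | ∃ A : Set (List Bool), IsPrefixSet A ∧ X ⊆ (⋃ w ∈ A, cyl w) ∧ x = ∑' w : A, ν w.1}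

theorem outerMeasure_eq (ν : List Bool → ℝ) (X : Set (ℕ → Bool)) :
    outerMeasure ν X = sInf (coverSet ν X) := rfl

theorem covSum_mem_coverSet {A : Set (List Bool)} (hA : IsPrefixSet A)
    {X : Set (ℕ → Bool)} (hcov : X ⊆ ⋃ w ∈ A, cyl w) : covSum ν A ∈ coverSet ν X :=
  ⟨A, hA, hcov, (covSum_eq_subtype ν A).symm⟩

theorem singleton_prefixSet (w : List Bool) : IsPrefixSet {w} := by
  intro u hu v hv _
  simp only [Set.mem_singleton_iff] at hu hv
  rw [hu, hv]

theorem SP_nil (x : ℕ → Bool) : SP [] x := by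
  unfold SP seqPrefix; simp

theorem coverSet_nonempty (hν : IsProbMeasure ν) (X : Set (ℕ → Bool)) :
    (coverSet ν X).Nonempty := by
  refine ⟨covSum ν {[]}, covSum_mem_coverSet (singleton_prefixSet []) ?_⟩
  intro x _
  simp only [Set.mem_iUnion]
  exact ⟨[], rfl, SP_nil x⟩

theorem coverSet_bddBelow (hν : IsProbMeasure ν) (X : Set (ℕ → Bool)) :
    BddBelow (coverSet ν X) := by
  refine ⟨0, fun x hx => ?_⟩
  obtain ⟨A, hA, hcov, rfl⟩ := hx
  rw [covSum_eq_subtype]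
  exact covSum_nonneg hν A

theorem outerMeasure_nonneg (hν : IsProbMeasure ν) (X : Set (ℕ → Bool)) :
    0 ≤ outerMeasure ν X :=
  le_csInf (coverSet_nonempty hν X) (fun x hx => by
    obtain ⟨A, hA, hcov, rfl⟩ := hx
    rw [covSum_eq_subtype]
    exact covSum_nonneg hν A)

theorem outerMeasure_le_covSum (hν : IsProbMeasure ν) {A : Set (List Bool)}
    (hA : IsPrefixSet A) {X : Set (ℕ → Bool)} (hcov : X ⊆ ⋃ w ∈ A, cyl w) :
    outerMeasure ν X ≤ covSum ν A :=
  csInf_le (coverSet_bddBelow hν X) (covSum_mem_coverSet hA hcov)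

theorem outerMeasure_mono (hν : IsProbMeasure ν) {X Y : Set (ℕ → Bool)} (h : X ⊆ Y) :
    outerMeasure ν X ≤ outerMeasure ν Y := by
  apply le_csInf (coverSet_nonempty hν Y)
  intro x hx
  obtain ⟨A, hA, hcov, rfl⟩ := hx
  rw [covSum_eq_subtype]
  exact outerMeasure_le_covSum hν hA (h.trans hcov)

theorem exists_cover (hν : IsProbMeasure ν) (X : Set (ℕ → Bool)) {ε : ℝ} (hε : 0 < ε) :
    ∃ A : Set (List Bool), IsPrefixSet A ∧ X ⊆ (⋃ w ∈ A, cyl w) ∧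
      covSum ν A < outerMeasure ν X + ε := by
  obtain ⟨x, hx, hlt⟩ := exists_lt_of_csInf_lt (coverSet_nonempty hν X)
    (show sInf (coverSet ν X) < outerMeasure ν X + ε by
      rw [outerMeasure_eq]; linarith [le_refl (sInf (coverSet ν X))])
  obtain ⟨A, hA, hcov, rfl⟩ := hx
  rw [covSum_eq_subtype] at hlt
  exact ⟨A, hA, hcov, hlt⟩

/-- the set of minimal elements -/
def minim (A : Set (List Bool)) : Set (List Bool) :=
  {u | u ∈ A ∧ ∀ v ∈ A, v <+: u → v = u}

theorem minim_prefixSet (A : Set (List Bool)) : IsPrefixSet (minim A) :=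
  fun u hu v hv huv => hv.2 u hu.1 huv

theorem minim_subset (A : Set (List Bool)) : minim A ⊆ A := fun _ hu => hu.1

theorem exists_minim (A : Set (List Bool)) : ∀ u ∈ A, ∃ p ∈ minim A, p <+: u := by
  have key : ∀ n, ∀ u, u.length ≤ n → u ∈ A → ∃ p ∈ minim A, p <+: u := by
    intro n
    induction n using Nat.strong_induction_on with
    | _ n ih =>
      intro u hlen hu
      by_cases hm : u ∈ minim A
      · exact ⟨u, hm, List.prefix_refl u⟩
      · have : ∃ v ∈ A, v <+: u ∧ v ≠ u := by
          by_contra hc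
          push_neg at hc
          exact hm ⟨hu, fun v hv hvu => hc v hv hvu⟩
        obtain ⟨v, hv, hvu, hne⟩ := this
        have hlt : v.length < n := by
          have h1 : v.length < u.length :=
            lt_of_le_of_ne hvu.length_le (fun h => hne (hvu.eq_of_length h))
          omega
        obtain ⟨p, hp, hpv⟩ := ih v.length hlt v le_rfl hv
        exact ⟨p, hp, hpv.trans hvu⟩
  exact fun u hu => key u.length u le_rfl hu

theorem minim_cover (A : Set (List Bool)) : (⋃ w ∈ A, cyl w) ⊆ ⋃ w ∈ minim A, cyl w := by
  intro x hx
  simp only [Set.mem_iUnion] at hx ⊢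
  obtain ⟨u, hu, hxu⟩ := hx
  obtain ⟨p, hp, hpu⟩ := exists_minim A u hu
  exact ⟨p, hp, cyl_mono hpu hxu⟩

/-- subadditivity for two sets -/
theorem outerMeasure_subadd (hν : IsProbMeasure ν) (S T : Set (ℕ → Bool)) :
    outerMeasure ν (S ∪ T) ≤ outerMeasure ν S + outerMeasure ν T := by
  apply le_of_forall_pos_le_add
  intro ε hε
  obtain ⟨A, hA, hAcov, hAs⟩ := exists_cover hν S (half_pos hε)
  obtain ⟨B, hB, hBcov, hBs⟩ := exists_cover hν T (half_pos hε)
  set C := minim (A ∪ B) with hC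
  have hCsub : C ⊆ A ∪ B := minim_subset _
  have hCcov : S ∪ T ⊆ ⋃ w ∈ C, cyl w := by
    refine Set.union_subset ?_ ?_ <;> intro x hx
    · apply minim_cover (A ∪ B)
      obtain ⟨s, hs⟩ := Set.mem_iUnion.mp (hAcov hx)
      simp only [Set.mem_iUnion] at hs ⊢
      exact ⟨s, Or.inl hs.1, hs.2⟩
    · apply minim_cover (A ∪ B)
      obtain ⟨s, hs⟩ := Set.mem_iUnion.mp (hBcov hx)
      simp only [Set.mem_iUnion] at hs ⊢
      exact ⟨s, Or.inr hs.1, hs.2⟩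
  have hsum : covSum ν C ≤ covSum ν A + covSum ν B := by
    unfold covSum
    rw [← Summable.tsum_add (summable_indicator_nu hν hA) (summable_indicator_nu hν hB)]
    apply Summable.tsum_le_tsum _ (summable_sub hν (minim_prefixSet _) (fun u hu => hu))
      ((summable_indicator_nu hν hA).add (summable_indicator_nu hν hB))
    intro u
    by_cases hu : u ∈ C
    · rw [Set.indicator_of_mem hu]
      rcases hCsub hu with h | h
      · rw [Set.indicator_of_mem h]
        have : 0 ≤ B.indicator ν u := Set.indicator_nonneg (fun v _ => nu_nonneg hν v) u
        linarith
      · rw [Set.indicator_of_mem h (f := ν)]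
        have : 0 ≤ A.indicator ν u := Set.indicator_nonneg (fun v _ => nu_nonneg hν v) u
        linarith
    · rw [Set.indicator_of_notMem hu]
      have h1 : 0 ≤ A.indicator ν u := Set.indicator_nonneg (fun v _ => nu_nonneg hν v) u
      have h2 : 0 ≤ B.indicator ν u := Set.indicator_nonneg (fun v _ => nu_nonneg hν v) u
      linarith
  calc outerMeasure ν (S ∪ T) ≤ covSum ν C := outerMeasure_le_covSum hν (minim_prefixSet _) hCcov
    _ ≤ covSum ν A + covSum ν B := hsum
    _ ≤ outerMeasure ν S + ε/2 + (outerMeasure ν T + ε/2) := by linarith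
    _ = outerMeasure ν S + outerMeasure ν T + ε := by ring

/-- localize a cover to extensions of w -/
theorem localize_cover (hν : IsProbMeasure ν) {A : Set (List Bool)} (hA : IsPrefixSet A)
    {Z : Set (ℕ → Bool)} (w : List Bool) (hZw : Z ⊆ cyl w) (hcov : Z ⊆ ⋃ u ∈ A, cyl u) :
    ∃ B : Set (List Bool), IsPrefixSet B ∧ (∀ u ∈ B, w <+: u) ∧
      (Z ⊆ ⋃ u ∈ B, cyl u) ∧ covSum ν B ≤ covSum ν A := by
  classical
  by_cases hex : ∃ u ∈ A, u <+: w
  · obtain ⟨u, hu, huw⟩ := hex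
    refine ⟨{w}, singleton_prefixSet w, ?_, ?_, ?_⟩
    · intro v hv; rw [Set.mem_singleton_iff] at hv; rw [hv]
    · intro x hx
      simp only [Set.mem_iUnion]
      exact ⟨w, rfl, hZw hx⟩
    · calc covSum ν {w} = ν w := by
            unfold covSum
            rw [← tsum_subtype]
            exact tsum_singleton w ν
        _ ≤ ν u := nu_mono hν huw
        _ ≤ covSum ν A := le_covSum hν hA hu
  · refine ⟨{u | u ∈ A ∧ w <+: u}, fun u hu v hv h => hA u hu.1 v hv.1 h, fun u hu => hu.2,
      ?_, covSum_mono_sub hν hA (fun u hu => hu.1)⟩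
    intro x hx
    obtain ⟨u, hu⟩ := Set.mem_iUnion.mp (hcov hx)
    simp only [Set.mem_iUnion] at hu ⊢
    obtain ⟨hu1, hu2⟩ := hu
    have hwx : SP w x := hZw hx
    have hux : SP u x := hu2
    rcases hux.comparable hwx with h | h
    · exact absurd ⟨u, hu1, h⟩ hex
    · exact ⟨u, ⟨hu1, h⟩, hu2⟩

theorem outerMeasure_cyl_le (hν : IsProbMeasure ν) (w : List Bool) :
    outerMeasure ν (cyl w) ≤ ν w := by
  have h : covSum ν {w} = ν w := by
    unfold covSum
    rw [← tsum_subtype]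
    exact tsum_singleton w ν
  rw [← h]
  apply outerMeasure_le_covSum hν (singleton_prefixSet w)
  intro x hx
  simp only [Set.mem_iUnion]
  exact ⟨w, rfl, hx⟩

end Stmt11

namespace Stmt11

variable {ν : List Bool → ℝ}

/-- strict extensions of w inside B -/
def eS (B : Set (List Bool)) (w : List Bool) : Set (List Bool) :=
  {u | u ∈ B ∧ w <+: u ∧ w ≠ u}

/-- extensions of w inside B -/
def eT (B : Set (List Bool)) (w : List Bool) : Set (List Bool) :=
  {u | u ∈ B ∧ w <+: u}

open Classical in
/-- the martingale associated to a cover -/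
noncomputable def coverM (ν : List Bool → ℝ) (B : Set (List Bool)) : List Bool → ℝ :=
  fun w =>
    if ν w = 0 then (if ∃ u ∈ B, u <+: w ∨ w <+: u then 1 else 0)
    else if ∃ u ∈ B, u <+: w then 1
    else covSum ν (eS B w) / ν w

theorem covSum_singleton (ν : List Bool → ℝ) (w : List Bool) : covSum ν {w} = ν w := by
  unfold covSum
  rw [← tsum_subtype]
  exact tsum_singleton w ν

theorem covSum_empty (ν : List Bool → ℝ) : covSum ν (∅ : Set (List Bool)) = 0 := by
  unfold covSum
  simp

theorem coverM_nonneg (hν : IsProbMeasure ν) (B : Set (List Bool)) (w : List Bool) :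
    0 ≤ coverM ν B w := by
  unfold coverM
  split_ifs with h1 h2 h3
  · exact zero_le_one
  · exact le_refl 0
  · exact zero_le_one
  · exact div_nonneg (covSum_nonneg hν _) (nu_nonneg hν w)

theorem coverM_mem_one {B : Set (List Bool)} {u : List Bool} (hu : u ∈ B) :
    coverM ν B u = 1 := by
  unfold coverM
  split_ifs with h1 h2 h3
  · rfl
  · exact absurd ⟨u, hu, Or.inl (List.prefix_refl u)⟩ h2
  · rfl
  · exact absurd ⟨u, hu, List.prefix_refl u⟩ h3

theorem coverM_succ {B : Set (List Bool)} {u : List Bool} (hu : u ∈ B)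
    {x : ℕ → Bool} (hx : x ∈ cyl u) : x ∈ S1 (coverM ν B) :=
  ⟨u.length, by rw [show seqPrefix x u.length = u from hx, coverM_mem_one hu]⟩

theorem coverM_ne_zero {B : Set (List Bool)} {w : List Bool}
    (h : coverM ν B w ≠ 0) : ∃ u ∈ B, u <+: w ∨ w <+: u := by
  by_contra hc
  push_neg at hc
  apply h
  unfold coverM
  have hS : eS B w = ∅ := by
    ext u
    simp only [eS, Set.mem_setOf_eq, Set.mem_empty_iff_false, iff_false]
    rintro ⟨hu, hwu, _⟩
    exact (hc u hu).2 hwu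
  split_ifs with h1 h2 h3
  · obtain ⟨u, hu, huw⟩ := h2
    rcases huw with h | h
    · exact absurd h (hc u hu).1
    · exact absurd h (hc u hu).2
  · rfl
  · obtain ⟨u, hu, huw⟩ := h3
    exact absurd huw (hc u hu).1
  · rw [hS, covSum_empty, zero_div]

theorem coverM_le (hν : IsProbMeasure ν) {B : Set (List Bool)} (hB : IsPrefixSet B)
    (w : List Bool) : coverM ν B w * ν w ≤ covSum ν B := by
  by_cases hw : ν w = 0
  · rw [hw, mul_zero]
    exact covSum_nonneg hν B
  · unfold coverM
    rw [if_neg hw]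
    split_ifs with h2
    · obtain ⟨u, hu, huw⟩ := h2
      rw [one_mul]
      exact le_trans (nu_mono hν huw) (le_covSum hν hB hu)
    · rw [div_mul_cancel₀ _ hw]
      exact covSum_mono_sub hν hB (fun u hu => hu.1)

theorem eT_zero (hν : IsProbMeasure ν) {B : Set (List Bool)} {c : List Bool}
    (hc : ν c = 0) : covSum ν (eT B c) = 0 := by
  unfold covSum
  convert tsum_zero with u
  by_cases hu : u ∈ eT B c
  · rw [Set.indicator_of_mem hu]
    exact nu_zero_of_prefix hν hu.2 hc
  · rw [Set.indicator_of_notMem hu]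

theorem covSum_split (hν : IsProbMeasure ν) {B : Set (List Bool)} (hB : IsPrefixSet B)
    (w : List Bool) :
    covSum ν (eS B w) = covSum ν (eT B (w ++ [false])) + covSum ν (eT B (w ++ [true])) := by
  have hsub0 : eT B (w ++ [false]) ⊆ B := fun u hu => hu.1
  have hsub1 : eT B (w ++ [true]) ⊆ B := fun u hu => hu.1
  have hdisj : Disjoint (eT B (w ++ [false])) (eT B (w ++ [true])) := by
    rw [Set.disjoint_left]
    rintro u ⟨_, h0⟩ ⟨_, h1⟩
    exact not_prefix_both h0 h1
  have hunion : eS B w = eT B (w ++ [false]) ∪ eT B (w ++ [true]) := by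
    ext u
    simp only [eS, eT, Set.mem_setOf_eq, Set.mem_union]
    constructor
    · rintro ⟨hu, hwu, hne⟩
      rcases prefix_split hwu hne with h | h
      · exact Or.inl ⟨hu, h⟩
      · exact Or.inr ⟨hu, h⟩
    · rintro (⟨hu, h⟩ | ⟨hu, h⟩) <;>
      · refine ⟨hu, (List.prefix_append w _).trans h, fun he => ?_⟩
        subst he
        have := h.length_le
        simp at this
  unfold covSum
  rw [hunion, Set.indicator_union_of_disjoint hdisj]
  exact Summable.tsum_add (summable_sub hν hB hsub0) (summable_sub hν hB hsub1)

theorem coverM_child (hν : IsProbMeasure ν) {B : Set (List Bool)} (hB : IsPrefixSet B)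
    {w : List Bool} (hw : ν w ≠ 0) (hnopre : ¬∃ u ∈ B, u <+: w) (b : Bool) :
    coverM ν B (w ++ [b]) * ν (w ++ [b]) = covSum ν (eT B (w ++ [b])) := by
  set c := w ++ [b] with hc
  by_cases hc0 : ν c = 0
  · rw [hc0, mul_zero, eT_zero hν hc0]
  · by_cases hpre : ∃ u ∈ B, u <+: c
    · obtain ⟨u, hu, huc⟩ := hpre
      have hcB : c ∈ B := by
        rcases prefix_snoc huc with h | h
        · exact absurd ⟨u, hu, h⟩ hnopre
        · rwa [h] at hu
      have h1 : coverM ν B c = 1 := coverM_mem_one hcB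
      rw [h1, one_mul]
      have hTc : eT B c = {c} := by
        ext u
        simp only [eT, Set.mem_setOf_eq, Set.mem_singleton_iff]
        constructor
        · rintro ⟨hu, hcu⟩
          exact (hB c hcB u hu hcu).symm
        · rintro rfl
          exact ⟨hcB, List.prefix_refl c⟩
      rw [hTc, covSum_singleton]
    · have hval : coverM ν B c = covSum ν (eS B c) / ν c := by
        unfold coverM
        rw [if_neg hc0, if_neg hpre]
      rw [hval, div_mul_cancel₀ _ hc0]
      congr 1
      ext u
      simp only [eS, eT, Set.mem_setOf_eq]
      constructor
      · rintro ⟨hu, hcu, _⟩; exact ⟨hu, hcu⟩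
      · rintro ⟨hu, hcu⟩
        refine ⟨hu, hcu, fun he => ?_⟩
        exact hpre ⟨u, hu, he ▸ List.prefix_refl c⟩

theorem coverM_martingale (hν : IsProbMeasure ν) {B : Set (List Bool)}
    (hB : IsPrefixSet B) : IsMartingale ν (coverM ν B) := by
  refine ⟨coverM_nonneg hν B, fun w => ?_⟩
  by_cases hw0 : ν w = 0
  · have h0 : ν (w ++ [false]) = 0 := nu_zero_of_prefix hν ⟨[false], rfl⟩ hw0
    have h1 : ν (w ++ [true]) = 0 := nu_zero_of_prefix hν ⟨[true], rfl⟩ hw0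
    rw [hw0, h0, h1]
    ring
  · by_cases hpre : ∃ u ∈ B, u <+: w
    · have hval : coverM ν B w = 1 := by
        unfold coverM
        rw [if_neg hw0, if_pos hpre]
      have hchild : ∀ b : Bool, coverM ν B (w ++ [b]) * ν (w ++ [b]) = ν (w ++ [b]) := by
        intro b
        by_cases hc0 : ν (w ++ [b]) = 0
        · rw [hc0, mul_zero]
        · obtain ⟨u, hu, huw⟩ := hpre
          have hval : coverM ν B (w ++ [b]) = 1 := by
            unfold coverM
            rw [if_neg hc0, if_pos ⟨u, hu, huw.trans (List.prefix_append w [b])⟩]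
          rw [hval, one_mul]
      rw [hval, one_mul, hchild false, hchild true]
      exact hν.2.2 w
    · have hval : coverM ν B w = covSum ν (eS B w) / ν w := by
        unfold coverM
        rw [if_neg hw0, if_neg hpre]
      rw [hval, div_mul_cancel₀ _ hw0, coverM_child hν hB hw0 hpre false,
        coverM_child hν hB hw0 hpre true]
      exact covSum_split hν hB w

end Stmt11

namespace Stmt11

variable {ν : List Bool → ℝ}

/-- minimal success nodes of a martingale -/
def Md (d : List Bool → ℝ) : Set (List Bool) :=
  {w | 1 ≤ d w ∧ ∀ v, v <+: w → v ≠ w → d v < 1}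

theorem Md_prefixSet (d : List Bool → ℝ) : IsPrefixSet (Md d) := by
  intro u hu v hv huv
  by_contra hne
  exact absurd hu.1 (not_le.mpr (hv.2 u huv hne))

theorem Md_cover (d : List Bool → ℝ) : S1 d ⊆ ⋃ w ∈ Md d, cyl w := by
  intro x hx
  obtain ⟨n, hn⟩ := hx
  have hP : ∃ m, 1 ≤ d (seqPrefix x m) := ⟨n, hn⟩
  classical
  set n₀ := Nat.find hP with hn₀
  set w := seqPrefix x n₀ with hw
  have hwx : SP w x := SP_seqPrefix x n₀
  have hwM : w ∈ Md d := by
    refine ⟨Nat.find_spec hP, fun v hvw hne => ?_⟩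
    have hvx : SP v x := SP.of_prefix hvw hwx
    have hlen : v.length < n₀ := by
      have h1 : v.length ≤ w.length := hvw.length_le
      rw [hw, seqPrefix_length] at h1
      rcases lt_or_eq_of_le h1 with h | h
      · exact h
      · exfalso
        apply hne
        apply hvw.eq_of_length
        rw [hw, seqPrefix_length, h]
    have := Nat.find_min hP hlen
    rw [not_le] at this
    rwa [show seqPrefix x v.length = v from hvx] at this
  simp only [Set.mem_iUnion]
  exact ⟨w, hwM, hwx⟩

theorem Md_capital (hν : IsProbMeasure ν) {d : List Bool → ℝ} (hd : IsMartingale ν d) :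
    covSum ν (Md d) ≤ d [] := by
  have h1 := antichain_tsum hν hd [] (Md_prefixSet d) (fun u _ => List.nil_prefix)
  have h2 : covSum ν (Md d) ≤ ∑' u, (Md d).indicator (fun u => d u * ν u) u := by
    unfold covSum
    apply Summable.tsum_le_tsum _ (summable_indicator_nu hν (Md_prefixSet d)) h1.1
    intro u
    by_cases hu : u ∈ Md d
    · rw [Set.indicator_of_mem hu, Set.indicator_of_mem hu]
      nlinarith [nu_nonneg hν u, hu.1]
    · rw [Set.indicator_of_notMem hu, Set.indicator_of_notMem hu]
  calc covSum ν (Md d) ≤ _ := h2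
    _ ≤ d [] * ν [] := h1.2
    _ = d [] := by rw [hν.1, mul_one]

theorem ville (hν : IsProbMeasure ν) {d : List Bool → ℝ} (hd : IsMartingale ν d) :
    outerMeasure ν (S1 d) ≤ d [] :=
  le_trans (outerMeasure_le_covSum hν (Md_prefixSet d) (Md_cover d)) (Md_capital hν hd)

theorem coverM_capital (hν : IsProbMeasure ν) {B : Set (List Bool)} (hB : IsPrefixSet B) :
    coverM ν B [] ≤ covSum ν B := by
  have := coverM_le hν hB []
  rwa [hν.1, mul_one] at this

/-- measurement implies Caratheodory measurability -/
theorem meas_to_car (hν : IsProbMeasure ν) {X : Set (ℕ → Bool)}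
    {Φ : ℕ → (List Bool → ℝ) → (List Bool → ℝ) × (List Bool → ℝ)}
    (hΦ : IsAllMeasurement ν X Φ) :
    ∀ Y : Set (ℕ → Bool),
      outerMeasure ν Y = outerMeasure ν (Y ∩ X) + outerMeasure ν (Y \ X) := by
  intro Y
  apply le_antisymm
  · calc outerMeasure ν Y = outerMeasure ν ((Y ∩ X) ∪ (Y \ X)) := by
          rw [Set.inter_union_diff]
      _ ≤ _ := outerMeasure_subadd hν _ _
  · apply le_of_forall_pos_le_add
    intro ε hε
    obtain ⟨r, hr⟩ := exists_pow_lt_of_lt_one (half_pos hε) (by norm_num : (1/2 : ℝ) < 1)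
    obtain ⟨A, hA, hcov, hsum⟩ := exists_cover hν Y (half_pos hε)
    set e := coverM ν A with he
    have hemart : IsMartingale ν e := coverM_martingale hν hA
    obtain ⟨hp, hq, hXp, hXq, hcap⟩ := hΦ r e hemart
    have hYS : Y ⊆ S1 e := by
      intro x hx
      obtain ⟨u, hu⟩ := Set.mem_iUnion.mp (hcov hx)
      simp only [Set.mem_iUnion] at hu
      exact coverM_succ hu.1 hu.2
    have h1 : outerMeasure ν (Y ∩ X) ≤ (Φ r e).1 [] := by
      refine le_trans (outerMeasure_mono hν ?_) (ville hν hp)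
      intro x hx
      exact hXp ⟨hx.2, hYS hx.1⟩
    have h2 : outerMeasure ν (Y \ X) ≤ (Φ r e).2 [] := by
      refine le_trans (outerMeasure_mono hν ?_) (ville hν hq)
      intro x hx
      exact hXq ⟨hx.2, hYS hx.1⟩
    calc outerMeasure ν (Y ∩ X) + outerMeasure ν (Y \ X) ≤ (Φ r e).1 [] + (Φ r e).2 [] :=
          add_le_add h1 h2
      _ ≤ e [] + (1/2) ^ r := hcap
      _ ≤ covSum ν A + (1/2) ^ r := by linarith [coverM_capital hν hA]
      _ ≤ outerMeasure ν Y + ε := by linarith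

theorem cyl_isOpen (w : List Bool) : IsOpen (cyl w) := by
  have hset : cyl w = ⋂ i : Fin w.length, {x : ℕ → Bool | x i.1 = w.getD i.1 false} := by
    ext x
    simp only [Set.mem_iInter, Set.mem_setOf_eq]
    constructor
    · intro h i
      have h1 := congrArg (fun l : List Bool => l.getD i.1 false) h
      rw [← h1]
      have h2 : i.1 < (seqPrefix x w.length).length := by rw [seqPrefix_length]; exact i.2
      rw [List.getD_eq_getElem _ _ h2]
      simp [seqPrefix]
    · intro h
      show seqPrefix x w.length = w
      apply List.ext_getElem (by simp [seqPrefix_length])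
      intro i h1 h2
      simp only [seqPrefix, List.getElem_ofFn]
      rw [show x i = w.getD i false from h ⟨i, h2⟩, List.getD_eq_getElem _ _ h2]
  rw [hset]
  apply isOpen_iInter_of_finite
  intro i
  have : {x : ℕ → Bool | x i.1 = w.getD i.1 false} =
      (fun x : ℕ → Bool => x i.1) ⁻¹' {w.getD i.1 false} := rfl
  rw [this]
  exact (continuous_apply i.1).isOpen_preimage _ (isOpen_discrete _)

theorem finite_cover_bound (hν : IsProbMeasure ν) :
    ∀ (n : ℕ) (w : List Bool) (F : Finset (List Bool)),
      (∀ u ∈ F, u.length ≤ w.length + n) → cyl w ⊆ (⋃ u ∈ (F : Set (List Bool)), cyl u) →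
      ν w ≤ ∑ u ∈ F, ν u := by
  classical
  have base : ∀ (w : List Bool) (F : Finset (List Bool)), (∃ u ∈ F, u <+: w) →
      ν w ≤ ∑ u ∈ F, ν u := by
    rintro w F ⟨u, hu, huw⟩
    calc ν w ≤ ν u := nu_mono hν huw
      _ ≤ ∑ v ∈ F, ν v := Finset.single_le_sum (fun v _ => nu_nonneg hν v) hu
  intro n
  induction n with
  | zero =>
    intro w F hlen hcov
    apply base
    have hx : ext w ∈ cyl w := SP_ext w
    obtain ⟨u, hu⟩ := Set.mem_iUnion.mp (hcov hx)
    simp only [Set.mem_iUnion] at hu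
    obtain ⟨hu1, hu2⟩ := hu
    refine ⟨u, hu1, ?_⟩
    rcases SP.comparable (hu2 : SP u (ext w)) (SP_ext w) with h | h
    · exact h
    · rw [h.eq_of_length (le_antisymm h.length_le (by simpa using hlen u hu1))]
  | succ n ih =>
    intro w F hlen hcov
    by_cases hex : ∃ u ∈ F, u <+: w
    · exact base w F hex
    · have hchild : ∀ b : Bool, ν (w ++ [b]) ≤
          ∑ u ∈ F.filter (fun u => w ++ [b] <+: u), ν u := by
        intro b
        apply ih (w ++ [b])
        · intro u hu
          rw [Finset.mem_filter] at hu
          have := hlen u hu.1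
          simp only [List.length_append, List.length_cons, List.length_nil]
          omega
        · intro x hx
          have hxw : x ∈ cyl w := cyl_mono (List.prefix_append w [b]) hx
          obtain ⟨u, hu⟩ := Set.mem_iUnion.mp (hcov hxw)
          simp only [Set.mem_iUnion, Finset.coe_filter, Set.mem_setOf_eq] at hu ⊢
          obtain ⟨hu1, hu2⟩ := hu
          have hcx : SP (w ++ [b]) x := hx
          rcases SP.comparable (hu2 : SP u x) hcx with h | h
          · rcases prefix_snoc h with h' | h'
            · exact absurd ⟨u, hu1, h'⟩ hex
            · exact ⟨u, ⟨hu1, by rw [h']⟩, hu2⟩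
          · exact ⟨u, ⟨hu1, h⟩, hu2⟩
      have hdisj : Disjoint (F.filter (fun u => w ++ [false] <+: u))
          (F.filter (fun u => w ++ [true] <+: u)) := by
        rw [Finset.disjoint_left]
        intro u hu0 hu1
        rw [Finset.mem_filter] at hu0 hu1
        exact not_prefix_both hu0.2 hu1.2
      calc ν w = ν (w ++ [false]) + ν (w ++ [true]) := hν.2.2 w
        _ ≤ ∑ u ∈ F.filter (fun u => w ++ [false] <+: u), ν u +
            ∑ u ∈ F.filter (fun u => w ++ [true] <+: u), ν u :=
            add_le_add (hchild false) (hchild true)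
        _ = ∑ u ∈ (F.filter (fun u => w ++ [false] <+: u) ∪
            F.filter (fun u => w ++ [true] <+: u)), ν u := (Finset.sum_union hdisj).symm
        _ ≤ ∑ u ∈ F, ν u := by
            apply Finset.sum_le_sum_of_subset_of_nonneg
            · intro u hu
              rcases Finset.mem_union.mp hu with h | h <;>
                exact (Finset.mem_filter.mp h).1
            · intro u _ _
              exact nu_nonneg hν u

theorem one_le_outerMeasure_univ (hν : IsProbMeasure ν) :
    1 ≤ outerMeasure ν (Set.univ : Set (ℕ → Bool)) := by
  apply le_csInf (coverSet_nonempty hν _)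
  intro x hx
  obtain ⟨A, hA, hcov, rfl⟩ := hx
  rw [covSum_eq_subtype]
  -- compactness: finite subcover
  have hopen : ∀ i : A, IsOpen (cyl i.1) := fun i => cyl_isOpen i.1
  have hcov' : (Set.univ : Set (ℕ → Bool)) ⊆ ⋃ i : A, cyl i.1 := by
    intro x hx
    obtain ⟨wA, hwA⟩ := Set.mem_iUnion.mp (hcov hx)
    simp only [Set.mem_iUnion] at hwA ⊢
    obtain ⟨h1, h2⟩ := hwA
    exact ⟨⟨wA, h1⟩, h2⟩
  obtain ⟨t, ht⟩ := isCompact_univ.elim_finite_subcover (fun i : A => cyl i.1) hopen hcov'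
  set t' : Finset (List Bool) := t.image Subtype.val with ht'
  have hcovt : cyl [] ⊆ ⋃ u ∈ (t' : Set (List Bool)), cyl u := by
    intro x _
    obtain ⟨i, hi⟩ := Set.mem_iUnion.mp (ht (Set.mem_univ x))
    simp only [Set.mem_iUnion] at hi ⊢
    obtain ⟨hi1, hi2⟩ := hi
    refine ⟨i.1, ?_, hi2⟩
    simp only [ht', Finset.coe_image, Set.mem_image, Finset.mem_coe]
    exact ⟨i, hi1, rfl⟩
  have h1 : ν [] ≤ ∑ u ∈ t', ν u := by
    apply finite_cover_bound hν (∑ u ∈ t', u.length) []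
    · intro u hu
      simp only [List.length_nil, Nat.zero_add]
      exact Finset.single_le_sum (fun v _ => Nat.zero_le _) hu
    · exact hcovt
  have h2 : ∑ u ∈ t', ν u ≤ covSum ν A := by
    have : ∑ u ∈ t', ν u = ∑ u ∈ t', A.indicator ν u := by
      apply Finset.sum_congr rfl
      intro u hu
      rw [ht', Finset.mem_image] at hu
      obtain ⟨i, _, rfl⟩ := hu
      rw [Set.indicator_of_mem i.2]
    rw [this]
    exact Summable.sum_le_tsum t' (fun u _ => Set.indicator_nonneg (fun v _ => nu_nonneg hν v) u)
      (summable_indicator_nu hν hA)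
  calc (1 : ℝ) = ν [] := hν.1.symm
    _ ≤ ∑ u ∈ t', ν u := h1
    _ ≤ covSum ν A := h2

end Stmt11

namespace Stmt11

variable {ν : List Bool → ℝ}

theorem combine (hν : IsProbMeasure ν) {d : List Bool → ℝ} (hd : IsMartingale ν d)
    {M : Set (List Bool)} (hM : IsPrefixSet M) (hd1 : ∀ w ∈ M, 1 ≤ d w)
    {B : List Bool → Set (List Bool)}
    (hBpre : ∀ w ∈ M, IsPrefixSet (B w)) (hBext : ∀ w ∈ M, ∀ u ∈ B w, w <+: u)
    (hG : Summable (M.indicator (fun w => d w * covSum ν (B w)))) :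
    ∃ D : List Bool → ℝ, IsMartingale ν D ∧
      D [] ≤ ∑' w, M.indicator (fun w => d w * covSum ν (B w)) w ∧
      ∀ x : ℕ → Bool, (∃ w ∈ M, ∃ u ∈ B w, x ∈ cyl u) → x ∈ S1 D := by
  classical
  set Gf : List Bool → ℝ := M.indicator (fun w => d w * covSum ν (B w)) with hGf
  set F : List Bool → List Bool → ℝ :=
    fun w' => M.indicator (fun w => d w * coverM ν (B w) w') with hF
  set D : List Bool → ℝ := fun w' => ∑' w, F w' w with hD
  have hFnn : ∀ w' w, 0 ≤ F w' w := by
    intro w' w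
    apply Set.indicator_nonneg
    intro v hv
    exact mul_nonneg (hd.1 v) (coverM_nonneg hν _ w')
  have hkey : ∀ w' w, F w' w * ν w' ≤ Gf w := by
    intro w' w
    by_cases hw : w ∈ M
    · simp only [hF, hGf, Set.indicator_of_mem hw]
      rw [mul_assoc]
      exact mul_le_mul_of_nonneg_left (coverM_le hν (hBpre w hw) w') (le_trans zero_le_one (hd1 w hw))
    · simp only [hF, hGf, Set.indicator_of_notMem hw, zero_mul, le_refl]
  have hsum_mul : ∀ w', Summable (fun w => F w' w * ν w') := by
    intro w'
    apply Summable.of_nonneg_of_le (fun w => mul_nonneg (hFnn w' w) (nu_nonneg hν w'))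
      (fun w => hkey w' w) hG
  have hsum : ∀ w', ν w' ≠ 0 → Summable (F w') := by
    intro w' hw'
    apply Summable.of_nonneg_of_le (hFnn w') (fun w => ?_) (hG.div_const (ν w'))
    rw [le_div_iff₀ (lt_of_le_of_ne (nu_nonneg hν w') (Ne.symm hw'))]
    exact hkey w' w
  have hmart : IsMartingale ν D := by
    refine ⟨fun w' => tsum_nonneg (hFnn w'), fun w' => ?_⟩
    have e1 : ∀ c, D c * ν c = ∑' w, F c w * ν c := fun c => tsum_mul_right.symm
    rw [e1, e1, e1, ← Summable.tsum_add (hsum_mul (w' ++ [false])) (hsum_mul (w' ++ [true]))]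
    apply tsum_congr
    intro w
    by_cases hw : w ∈ M
    · simp only [hF, Set.indicator_of_mem hw]
      have hcm := (coverM_martingale hν (hBpre w hw)).2 w'
      calc d w * coverM ν (B w) w' * ν w' = d w * (coverM ν (B w) w' * ν w') := by ring
        _ = d w * (coverM ν (B w) (w' ++ [false]) * ν (w' ++ [false]) +
            coverM ν (B w) (w' ++ [true]) * ν (w' ++ [true])) := by rw [hcm]
        _ = _ := by ring
    · simp only [hF, Set.indicator_of_notMem hw]
      ring
  have hcap : D [] ≤ ∑' w, Gf w := by
    apply Summable.tsum_le_tsum _ (hsum [] (by rw [hν.1]; norm_num)) hG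
    intro w
    have := hkey [] w
    rwa [hν.1, mul_one] at this
  refine ⟨D, hmart, hcap, ?_⟩
  rintro x ⟨w, hw, u, hu, hxu⟩
  refine ⟨u.length, ?_⟩
  rw [show seqPrefix x u.length = u from hxu]
  -- summability at u : finite support
  set s : Finset (List Bool) := (Finset.range (u.length + 1)).image (fun n => u.take n) with hs
  have hsupp : ∀ w'' ∉ s, F u w'' = 0 := by
    intro w'' hw''
    by_contra hne
    have hwM : w'' ∈ M := by
      by_contra hc
      exact hne (Set.indicator_of_notMem hc _)
    simp only [hF, Set.indicator_of_mem hwM] at hne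
    have hcne : coverM ν (B w'') u ≠ 0 := fun h => hne (by rw [h, mul_zero])
    obtain ⟨u', hu', hcomp⟩ := coverM_ne_zero hcne
    have hwu : w'' <+: u := by
      rcases hcomp with h | h
      · exact (hBext w'' hwM u' hu').trans h
      · rcases List.prefix_or_prefix_of_prefix (hBext w'' hwM u' hu') h with h2 | h2
        · -- w'' <+: u
          exact h2
        · -- u <+: w''
          have hww : w = w'' := hM w hw w'' hwM (((hBext w hw u hu).trans h2))
          rw [← hww]
          exact hBext w hw u hu
    apply hw''
    rw [hs, Finset.mem_image]
    refine ⟨w''.length, ?_, (List.prefix_iff_eq_take.mp hwu).symm⟩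
    rw [Finset.mem_range]
    have := hwu.length_le
    omega
  have hsumu : Summable (F u) := summable_of_ne_finset_zero hsupp
  have hFu : 1 ≤ F u w := by
    simp only [hF, Set.indicator_of_mem hw, coverM_mem_one hu, mul_one]
    exact hd1 w hw
  calc (1:ℝ) ≤ F u w := hFu
    _ ≤ ∑' w'', F u w'' := Summable.le_tsum hsumu w (fun j _ => hFnn u j)
  
end Stmt11

namespace Stmt11

variable {ν : List Bool → ℝ}

theorem geom_summable : Summable (fun w : List Bool => (1/2 : ℝ) ^ (Encodable.encode w)) :=
  Summable.comp_injective summable_geometric_two Encodable.encode_injective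

theorem geom_tsum_le : ∑' w : List Bool, (1/2 : ℝ) ^ (Encodable.encode w) ≤ 2 := by
  have h := Summable.tsum_le_tsum_of_inj (Encodable.encode : List Bool → ℕ)
    Encodable.encode_injective (fun c _ => by positivity) (fun w => le_rfl)
    geom_summable summable_geometric_two
  calc ∑' w : List Bool, (1/2 : ℝ) ^ (Encodable.encode w) ≤ ∑' n : ℕ, (1/2 : ℝ) ^ n := h
    _ = 2 := tsum_geometric_two

theorem car_to_meas_main (hν : IsProbMeasure ν) {X : Set (ℕ → Bool)}
    (hCar : ∀ Y : Set (ℕ → Bool),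
      outerMeasure ν Y = outerMeasure ν (Y ∩ X) + outerMeasure ν (Y \ X))
    (r : ℕ) {d : List Bool → ℝ} (hd : IsMartingale ν d) :
    ∃ p : (List Bool → ℝ) × (List Bool → ℝ),
      IsMartingale ν p.1 ∧ IsMartingale ν p.2 ∧
      X ∩ S1 d ⊆ S1 p.1 ∧ Xᶜ ∩ S1 d ⊆ S1 p.2 ∧
      p.1 [] + p.2 [] ≤ d [] + (1/2 : ℝ) ^ r := by
  classical
  set M := Md d with hMdef
  have hM : IsPrefixSet M := Md_prefixSet d
  have hd1 : ∀ w ∈ M, 1 ≤ d w := fun w hw => hw.1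
  set δ : List Bool → ℝ :=
    fun w => (1/2 : ℝ) ^ r * (1/2 : ℝ) ^ (Encodable.encode w) / (2 * d w) with hδ
  have hδpos : ∀ w ∈ M, 0 < δ w := by
    intro w hw
    have h1 : (0:ℝ) < d w := lt_of_lt_of_le zero_lt_one (hd1 w hw)
    rw [hδ]
    positivity
  have hcovers : ∀ w ∈ M, ∃ Bp Bm : Set (List Bool),
      IsPrefixSet Bp ∧ (∀ u ∈ Bp, w <+: u) ∧ (cyl w ∩ X ⊆ ⋃ u ∈ Bp, cyl u) ∧
      IsPrefixSet Bm ∧ (∀ u ∈ Bm, w <+: u) ∧ (cyl w \ X ⊆ ⋃ u ∈ Bm, cyl u) ∧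
      covSum ν Bp + covSum ν Bm ≤ ν w + δ w := by
    intro w hw
    have hhalf : 0 < δ w / 2 := half_pos (hδpos w hw)
    obtain ⟨A1, hA1, hcov1, hs1⟩ := exists_cover hν (cyl w ∩ X) hhalf
    obtain ⟨A2, hA2, hcov2, hs2⟩ := exists_cover hν (cyl w \ X) hhalf
    obtain ⟨Bp, hBp1, hBp2, hBp3, hBp4⟩ :=
      localize_cover hν hA1 w Set.inter_subset_left hcov1
    obtain ⟨Bm, hBm1, hBm2, hBm3, hBm4⟩ :=
      localize_cover hν hA2 w Set.diff_subset hcov2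
    refine ⟨Bp, Bm, hBp1, hBp2, hBp3, hBm1, hBm2, hBm3, ?_⟩
    have hsum := hCar (cyl w)
    have hle := outerMeasure_cyl_le hν w
    calc covSum ν Bp + covSum ν Bm ≤ covSum ν A1 + covSum ν A2 := add_le_add hBp4 hBm4
      _ ≤ outerMeasure ν (cyl w ∩ X) + δ w / 2 + (outerMeasure ν (cyl w \ X) + δ w / 2) := by
          linarith
      _ = outerMeasure ν (cyl w) + δ w := by rw [hsum]; ring
      _ ≤ ν w + δ w := by linarith
  choose! Bp Bm hBp1 hBp2 hBp3 hBm1 hBm2 hBm3 hsum using hcovers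
  -- summability machinery
  have hdnu := antichain_tsum hν hd [] hM (fun u _ => List.nil_prefix)
  set geo : List Bool → ℝ := fun w => (1/2 : ℝ) ^ r * (1/2 : ℝ) ^ (Encodable.encode w) / 2
    with hgeo
  have hgeos : Summable geo := by
    have := (geom_summable.mul_left ((1/2 : ℝ) ^ r)).div_const 2
    convert this using 1
  have hgeonn : ∀ w, 0 ≤ geo w := fun w => by rw [hgeo]; positivity
  have hddelta : ∀ w ∈ M, d w * δ w = geo w := by
    intro w hw
    have h1 : d w ≠ 0 := by
      have := hd1 w hw; linarith
    rw [hδ, hgeo]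
    field_simp
  have hkey : ∀ w, M.indicator (fun w => d w * covSum ν (Bp w)) w +
      M.indicator (fun w => d w * covSum ν (Bm w)) w ≤
      M.indicator (fun w => d w * ν w) w + geo w := by
    intro w
    by_cases hw : w ∈ M
    · simp only [Set.indicator_of_mem hw]
      have h1 : covSum ν (Bp w) + covSum ν (Bm w) ≤ ν w + δ w := hsum w hw
      have h2 : 0 ≤ d w := le_trans zero_le_one (hd1 w hw)
      have h3 : d w * (covSum ν (Bp w) + covSum ν (Bm w)) ≤ d w * (ν w + δ w) :=
        mul_le_mul_of_nonneg_left h1 h2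
      have h4 := hddelta w hw
      nlinarith
    · simp only [Set.indicator_of_notMem hw]
      have := hgeonn w
      linarith
  have hnnp : ∀ w, 0 ≤ M.indicator (fun w => d w * covSum ν (Bp w)) w :=
    fun w => Set.indicator_nonneg
      (fun v hv => mul_nonneg (le_trans zero_le_one (hd1 v hv)) (covSum_nonneg hν _)) w
  have hnnm : ∀ w, 0 ≤ M.indicator (fun w => d w * covSum ν (Bm w)) w :=
    fun w => Set.indicator_nonneg
      (fun v hv => mul_nonneg (le_trans zero_le_one (hd1 v hv)) (covSum_nonneg hν _)) w
  have hHsum : Summable (fun w => M.indicator (fun w => d w * ν w) w + geo w) :=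
    hdnu.1.add hgeos
  have hGp : Summable (M.indicator (fun w => d w * covSum ν (Bp w))) := by
    apply Summable.of_nonneg_of_le hnnp (fun w => ?_) hHsum
    have := hkey w
    have := hnnm w
    linarith
  have hGm : Summable (M.indicator (fun w => d w * covSum ν (Bm w))) := by
    apply Summable.of_nonneg_of_le hnnm (fun w => ?_) hHsum
    have := hkey w
    have := hnnp w
    linarith
  obtain ⟨Dp, hDpm, hDpcap, hDpsucc⟩ := combine hν hd hM hd1 hBp1 hBp2 hGp
  obtain ⟨Dm, hDmm, hDmcap, hDmsucc⟩ := combine hν hd hM hd1 hBm1 hBm2 hGm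
  refine ⟨(Dp, Dm), hDpm, hDmm, ?_, ?_, ?_⟩
  · intro x hx
    obtain ⟨w, hw⟩ := Set.mem_iUnion.mp (Md_cover d hx.2)
    simp only [Set.mem_iUnion] at hw
    obtain ⟨hw1, hw2⟩ := hw
    obtain ⟨u, hu⟩ := Set.mem_iUnion.mp (hBp3 w hw1 ⟨hw2, hx.1⟩)
    simp only [Set.mem_iUnion] at hu
    exact hDpsucc x ⟨w, hw1, u, hu.1, hu.2⟩
  · intro x hx
    obtain ⟨w, hw⟩ := Set.mem_iUnion.mp (Md_cover d hx.2)
    simp only [Set.mem_iUnion] at hw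
    obtain ⟨hw1, hw2⟩ := hw
    obtain ⟨u, hu⟩ := Set.mem_iUnion.mp (hBm3 w hw1 ⟨hw2, hx.1⟩)
    simp only [Set.mem_iUnion] at hu
    exact hDmsucc x ⟨w, hw1, u, hu.1, hu.2⟩
  · have h1 : Dp [] + Dm [] ≤
        ∑' w, (M.indicator (fun w => d w * covSum ν (Bp w)) w +
          M.indicator (fun w => d w * covSum ν (Bm w)) w) := by
      rw [Summable.tsum_add hGp hGm]
      exact add_le_add hDpcap hDmcap
    have h2 : ∑' w, (M.indicator (fun w => d w * covSum ν (Bp w)) w +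
        M.indicator (fun w => d w * covSum ν (Bm w)) w) ≤
        ∑' w, (M.indicator (fun w => d w * ν w) w + geo w) :=
      Summable.tsum_le_tsum hkey (hGp.add hGm) hHsum
    have h3 : ∑' w, (M.indicator (fun w => d w * ν w) w + geo w) =
        (∑' w, M.indicator (fun w => d w * ν w) w) + ∑' w, geo w :=
      Summable.tsum_add hdnu.1 hgeos
    have h4 : ∑' w, M.indicator (fun w => d w * ν w) w ≤ d [] := by
      have := hdnu.2
      rwa [hν.1, mul_one] at this
    have h5 : ∑' w, geo w ≤ (1/2 : ℝ) ^ r := by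
      have he : ∑' w, geo w = ((1/2 : ℝ) ^ r / 2) * ∑' w : List Bool,
          (1/2 : ℝ) ^ (Encodable.encode w) := by
        rw [← tsum_mul_left]
        apply tsum_congr
        intro w
        rw [hgeo]
        ring
      rw [he]
      have h6 := geom_tsum_le
      have h7 : (0:ℝ) ≤ (1/2 : ℝ) ^ r / 2 := by positivity
      nlinarith
    linarith

theorem car_to_meas (hν : IsProbMeasure ν) {X : Set (ℕ → Bool)}
    (hCar : ∀ Y : Set (ℕ → Bool),
      outerMeasure ν Y = outerMeasure ν (Y ∩ X) + outerMeasure ν (Y \ X)) :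
    ∃ Φ, IsAllMeasurement ν X Φ := by
  classical
  refine ⟨fun r d => if h : IsMartingale ν d then
    Classical.choose (car_to_meas_main hν hCar r h) else (fun _ => 1, fun _ => 1), ?_⟩
  intro r d hd
  have hspec := Classical.choose_spec (car_to_meas_main hν hCar r hd)
  simp only [dif_pos hd]
  exact hspec

theorem formula (hν : IsProbMeasure ν) {X : Set (ℕ → Bool)}
    {Φ : ℕ → (List Bool → ℝ) → (List Bool → ℝ) × (List Bool → ℝ)}
    (hΦ : IsAllMeasurement ν X Φ) :
    outerMeasure ν X = ⨅ r : ℕ, (Φ r (fun _ => 1)).1 [] := by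
  have hone : IsMartingale ν (fun _ => (1:ℝ)) := one_martingale hν
  have hs := fun r => hΦ r (fun _ => 1) hone
  have huniv : ∀ x : ℕ → Bool, x ∈ S1 (fun _ => (1:ℝ)) := fun x => ⟨0, le_refl 1⟩
  set a : ℕ → ℝ := fun r => (Φ r (fun _ => 1)).1 [] with ha
  have h1 : ∀ r, outerMeasure ν X ≤ a r := by
    intro r
    refine le_trans (outerMeasure_mono hν ?_) (ville hν (hs r).1)
    intro x hx
    exact (hs r).2.2.1 ⟨hx, huniv x⟩
  have hbdd : BddBelow (Set.range a) := by
    refine ⟨0, fun y hy => ?_⟩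
    obtain ⟨r, rfl⟩ := hy
    exact (hs r).1.1 []
  apply le_antisymm (le_ciInf h1)
  apply le_of_forall_pos_le_add
  intro ε hε
  obtain ⟨r, hr⟩ := exists_pow_lt_of_lt_one hε (by norm_num : (1/2 : ℝ) < 1)
  have hXc : outerMeasure ν Xᶜ ≤ (Φ r (fun _ => 1)).2 [] := by
    refine le_trans (outerMeasure_mono hν ?_) (ville hν (hs r).2.1)
    intro x hx
    exact (hs r).2.2.2.1 ⟨hx, huniv x⟩
  have hu : (1:ℝ) ≤ outerMeasure ν X + outerMeasure ν Xᶜ := by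
    have h3 := meas_to_car hν hΦ Set.univ
    rw [Set.univ_inter] at h3
    have h4 : (Set.univ : Set (ℕ → Bool)) \ X = Xᶜ := by
      ext x; simp
    rw [h4] at h3
    calc (1:ℝ) ≤ outerMeasure ν Set.univ := one_le_outerMeasure_univ hν
      _ = _ := h3
  have hcap := (hs r).2.2.2.2
  calc ⨅ r : ℕ, a r ≤ a r := ciInf_le hbdd r
    _ ≤ 1 + (1/2:ℝ)^r - (Φ r (fun _ => 1)).2 [] := by
        have : a r + (Φ r (fun _ => 1)).2 [] ≤ 1 + (1/2:ℝ)^r := hcap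
        linarith
    _ ≤ outerMeasure ν X + (1/2:ℝ)^r := by linarith
    _ ≤ outerMeasure ν X + ε := by linarith

end Stmt11


theorem stmt11 (ν : List Bool → ℝ) (hν : IsProbMeasure ν) (X : Set (ℕ → Bool)) :
    ((∀ Y : Set (ℕ → Bool),
        outerMeasure ν Y = outerMeasure ν (Y ∩ X) + outerMeasure ν (Y \ X)) ↔
      ∃ Φ, IsAllMeasurement ν X Φ) ∧
    ∀ Φ, IsAllMeasurement ν X Φ →
      outerMeasure ν X = ⨅ r : ℕ, (Φ r (fun _ => 1)).1 [] := by
  constructor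
  · constructor
    · intro hCar
      exact Stmt11.car_to_meas hν hCar
    · rintro ⟨Φ, hΦ⟩
      exact Stmt11.meas_to_car hν hΦ
  · intro Φ hΦ
    exact Stmt11.formula hν hΦ
end

section
/- Let ν be a probability measure on Cantor space and X ⊆ Cantor space. If there exists a family (d_r)_{r∈ℕ} of regular ν-martingales with X ⊆ S¹[d_r] and d_r(λ) ≤ 2^{-r} for every r (a regular ν-null cover of X), then the function d defined by d(w) = Σ_{r=0}^∞ d_r(w) when ν(w) > 0 and d(w) = |w| when ν(w) = 0 is a well-defined ν-martingale, and X ⊆ S^∞_str[d], i.e., d succeeds strongly on every element of X: lim_{n→∞} d(A[0..n−1]) = ∞ for all A ∈ X. -/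
lemma mart_bound {ν d : List Bool → ℝ} (hν : IsProbMeasure ν) (hd : IsMartingale ν d)
    (w : List Bool) : d w * ν w ≤ d [] := by
  induction w using List.reverseRecOn with
  | nil => simp [hν.1]
  | append_singleton v b ih =>
    have h := hd.2 v
    have hb : d (v ++ [b]) * ν (v ++ [b]) ≤ d v * ν v := by
      have h0 := mul_nonneg (hd.1 (v ++ [false])) (hν.2.1 (v ++ [false])).1
      have h1 := mul_nonneg (hd.1 (v ++ [true])) (hν.2.1 (v ++ [true])).1
      cases b <;> linarith
    linarith

lemma summable_ds {ν : List Bool → ℝ} (hν : IsProbMeasure ν) {ds : ℕ → List Bool → ℝ}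
    (hmart : ∀ r, IsMartingale ν (ds r)) (hinit : ∀ r, ds r [] ≤ (1/2:ℝ)^r)
    {w : List Bool} (hw : 0 < ν w) : Summable (fun r => ds r w) := by
  refine Summable.of_nonneg_of_le (fun r => (hmart r).1 w) (fun r => ?_)
    (summable_geometric_two.mul_left (1 / ν w))
  have h1 := mart_bound hν (hmart r) w
  have h2 := hinit r
  rw [div_mul_eq_mul_div, one_mul, le_div_iff₀ hw]
  linarith

lemma summable_dsnu {ν : List Bool → ℝ} (hν : IsProbMeasure ν) {ds : ℕ → List Bool → ℝ}
    (hmart : ∀ r, IsMartingale ν (ds r)) (hinit : ∀ r, ds r [] ≤ (1/2:ℝ)^r)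
    (w : List Bool) : Summable (fun r => ds r w * ν w) := by
  refine Summable.of_nonneg_of_le
    (fun r => mul_nonneg ((hmart r).1 w) (hν.2.1 w).1) (fun r => ?_)
    summable_geometric_two
  exact (mart_bound hν (hmart r) w).trans (hinit r)

lemma seqPrefix_succ (A : ℕ → Bool) (n : ℕ) :
    seqPrefix A (n + 1) = seqPrefix A n ++ [A n] := by
  rw [seqPrefix, List.ofFn_succ', List.concat_eq_append]
  rfl

lemma seqPrefix_prefix (A : ℕ → Bool) {m n : ℕ} (h : m ≤ n) :
    seqPrefix A m <+: seqPrefix A n := by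
  induction n, h using Nat.le_induction with
  | base => exact List.prefix_refl _
  | succ n hmn ih =>
    refine ih.trans ?_
    rw [seqPrefix_succ]
    exact List.prefix_append _ _

lemma nu_antitone {ν : List Bool → ℝ} (hν : IsProbMeasure ν) (w : List Bool) (b : Bool) :
    ν (w ++ [b]) ≤ ν w := by
  have h := hν.2.2 w
  have h0 := (hν.2.1 (w ++ [false])).1
  have h1 := (hν.2.1 (w ++ [true])).1
  cases b <;> linarith

theorem stmt17 (ν : List Bool → ℝ) (hν : IsProbMeasure ν)
    (X : Set (ℕ → Bool)) (ds : ℕ → List Bool → ℝ)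
    -- (d_r) is a regular ν-null cover of X:
    (hmart : ∀ r, IsMartingale ν (ds r))
    (hreg : ∀ r v w, v <+: w → 1 ≤ ds r v → 1 ≤ ds r w)
    (hcov : ∀ r, X ⊆ S1 (ds r))
    (hinit : ∀ r, ds r [] ≤ (1/2 : ℝ) ^ r) :
    IsMartingale ν
      (fun w => if 0 < ν w then ∑' r : ℕ, ds r w else (w.length : ℝ)) ∧
    ∀ A ∈ X, Filter.Tendsto
      (fun n => if 0 < ν (seqPrefix A n) then ∑' r : ℕ, ds r (seqPrefix A n)
        else ((seqPrefix A n).length : ℝ))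
      Filter.atTop Filter.atTop := by
  constructor
  · constructor
    · intro w
      by_cases hw : 0 < ν w
      · simp only [if_pos hw]
        exact tsum_nonneg fun r => (hmart r).1 w
      · simp only [if_neg hw]
        positivity
    · intro w
      by_cases hw : 0 < ν w
      · have key : (∑' r, ds r w) * ν w
            = ∑' r, (ds r (w ++ [false]) * ν (w ++ [false])
              + ds r (w ++ [true]) * ν (w ++ [true])) := by
          rw [← tsum_mul_right]
          exact tsum_congr fun r => (hmart r).2 w
        have child : ∀ b : Bool,
            (∑' r, ds r (w ++ [b]) * ν (w ++ [b]))
              = (if 0 < ν (w ++ [b]) then ∑' r : ℕ, ds r (w ++ [b])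
                  else ((w ++ [b]).length : ℝ)) * ν (w ++ [b]) := by
          intro b
          by_cases hb : 0 < ν (w ++ [b])
          · rw [if_pos hb, ← tsum_mul_right]
          · have h0 : ν (w ++ [b]) = 0 :=
              le_antisymm (not_lt.1 hb) (hν.2.1 _).1
            simp [h0]
        simp only [if_pos hw, key,
          Summable.tsum_add (summable_dsnu hν hmart hinit (w ++ [false]))
            (summable_dsnu hν hmart hinit (w ++ [true])),
          child false, child true]
      · have h0 : ν w = 0 := le_antisymm (not_lt.1 hw) (hν.2.1 _).1
        have hc := hν.2.2 w
        have hl := (hν.2.1 (w ++ [false])).1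
        have hr := (hν.2.1 (w ++ [true])).1
        have h0l : ν (w ++ [false]) = 0 := by linarith
        have h0r : ν (w ++ [true]) = 0 := by linarith
        simp [h0, h0l, h0r]
  · intro A hA
    by_cases hall : ∀ n, 0 < ν (seqPrefix A n)
    · rw [Filter.tendsto_atTop]
      intro b
      obtain ⟨k, hk⟩ := exists_nat_ge b
      choose nr hnr using fun r => hcov r hA
      set N := (Finset.range k).sup nr with hN
      filter_upwards [Filter.eventually_ge_atTop N] with n hn
      rw [if_pos (hall n)]
      have hsum : ∀ r ∈ Finset.range k, (1:ℝ) ≤ ds r (seqPrefix A n) := by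
        intro r hr
        exact hreg r _ _ (seqPrefix_prefix A ((Finset.le_sup hr).trans hn)) (hnr r)
      calc b ≤ (k : ℝ) := hk
        _ = ∑ _r ∈ Finset.range k, (1:ℝ) := by simp
        _ ≤ ∑ r ∈ Finset.range k, ds r (seqPrefix A n) := Finset.sum_le_sum hsum
        _ ≤ ∑' r, ds r (seqPrefix A n) :=
            Summable.sum_le_tsum _ (fun r _ => (hmart r).1 _)
              (summable_ds hν hmart hinit (hall n))
    · push_neg at hall
      obtain ⟨N, hN⟩ := hall
      have hNz : ν (seqPrefix A N) = 0 := le_antisymm hN (hν.2.1 _).1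
      have hzero : ∀ n, N ≤ n → ν (seqPrefix A n) = 0 := by
        intro n hn
        induction n, hn using Nat.le_induction with
        | base => exact hNz
        | succ n hmn ih =>
          have := nu_antitone hν (seqPrefix A n) (A n)
          rw [← seqPrefix_succ] at this
          exact le_antisymm (by linarith [ih]) (hν.2.1 _).1
      refine (tendsto_natCast_atTop_atTop (R := ℝ)).congr' ?_
      filter_upwards [Filter.eventually_ge_atTop N] with n hn
      rw [if_neg (by rw [hzero n hn]; exact lt_irrefl 0)]
      simp [seqPrefix]
end
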